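/- A commutative reduced ring R has no countably generated sd-ideal if and only if R satisfies property (A) and Min(R) is countably compact (every countable open cover by basic opens has a finite subcover). -/

import Mathlib

/-!
An ideal `span S` avoids every minimal prime exactly when the basic opens `D(a)`, `a ∈ S`, cover
`Min(R)`. In a reduced ring every element of a minimal prime `P` is killed by an element outside
`P`; hence a finitely generated ideal inside a minimal prime has a nonzero annihilator, while an
element annihilating a finite cover of `Min(R)` lies in every minimal prime and so vanishes.
Thus a countable cover without finite subcover generates an sd-ideal, a finitely generated ideal
of zero divisors violating (A) avoids every minimal prime and is an sd-ideal, and a finite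
subcover of a countably generated sd-ideal spans an ideal of zero divisors violating (A).
-/

/-- The minimal prime spectrum of `R`, with the subspace (Zariski) topology. -/
abbrev MinSpec (R : Type*) [CommRing R] :=
  {P : PrimeSpectrum R // P.asIdeal ∈ minimalPrimes R}

open Ideal

section

variable {R : Type*} [CommRing R]

def IsSdIdeal (I : Ideal R) : Prop :=
  (∀ x ∈ I, x ∉ nonZeroDivisors R) ∧ ∀ P ∈ minimalPrimes R, ¬ I ≤ P

/-- The basic open sets `D(a)`, `a ∈ S`, cover `Min(R)`. -/
def CoversMinSpec (S : Set R) : Prop :=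
  ∀ P : MinSpec R, ∃ a ∈ S, a ∉ P.1.asIdeal

theorem coversMinSpec_iff_forall_not_span_le {S : Set R} :
    CoversMinSpec S ↔ ∀ P ∈ minimalPrimes R, ¬ span S ≤ P := by
  simp only [CoversMinSpec, span_le, Set.not_subset, SetLike.mem_coe]
  exact ⟨fun h P hP => h ⟨⟨P, hP.isPrime⟩, hP⟩, fun h P => h P.1.asIdeal P.2⟩

theorem isSdIdeal_span_of_coversMinSpec {S : Set R} (hS : CoversMinSpec S)
    (hfin : ¬ ∃ T : Finset R, ↑T ⊆ S ∧ CoversMinSpec (T : Set R)) : IsSdIdeal (span S) := by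
  refine ⟨fun x hx => ?_, coversMinSpec_iff_forall_not_span_le.mp hS⟩
  obtain ⟨T, hTS, hxT⟩ := Submodule.mem_span_finite_of_mem_span hx
  obtain ⟨P, hTP⟩ : ∃ P : MinSpec R, ∀ a ∈ T, a ∈ P.1.asIdeal := by
    simpa [CoversMinSpec] using fun hT => hfin ⟨T, hTS, hT⟩
  exact notMem_nonZeroDivisors_of_mem_mem_minimalPrimes (span_le.mpr hTP hxT) P.2

variable [IsReduced R]

theorem exists_notMem_mul_eq_zero_of_mem_minimalPrimes {P : Ideal R}
    (hP : P ∈ minimalPrimes R) {x : R} (hx : x ∈ P) : ∃ s ∉ P, s * x = 0 := by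
  have := hP.isPrime
  -- `R_P` is zero-dimensional, so `x` becomes nilpotent there.
  obtain ⟨n, hn⟩ : IsNilpotent (algebraMap R (Localization.AtPrime P) x) := by
    have : Ring.KrullDimLE 0 (Localization.AtPrime P) := .of_isLocalization _ hP _
    rw [Ring.KrullDimLE.isNilpotent_iff_mem_maximalIdeal]
    exact (IsLocalization.AtPrime.to_map_mem_maximal_iff _ P x).mpr hx
  rw [← map_pow, IsLocalization.map_eq_zero_iff P.primeCompl] at hn
  obtain ⟨⟨s, hsP⟩, hs⟩ := hn
  refine ⟨s, hsP, IsReduced.eq_zero _ ⟨n + 1, ?_⟩⟩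
  calc (s * x) ^ (n + 1) = s ^ n * x * (s * x ^ n) := by ring
    _ = 0 := by rw [hs, mul_zero]

theorem exists_notMem_forall_mul_eq_zero_of_fg_of_le {P I : Ideal R}
    (hP : P ∈ minimalPrimes R) (hI : I.FG) (hIP : I ≤ P) :
    ∃ s ∉ P, ∀ x ∈ I, s * x = 0 := by
  have := hP.isPrime
  obtain ⟨t, rfl⟩ := hI
  choose! s hsP hsx using fun x (hx : x ∈ t) =>
    exists_notMem_mul_eq_zero_of_mem_minimalPrimes hP (hIP (subset_span hx))
  have hann : ∏ x ∈ t, s x ∈ (span (t : Set R)).annihilator := by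
    refine (Submodule.mem_annihilator_span _ _).mpr fun ⟨x, hx⟩ => ?_
    obtain ⟨c, hc⟩ := Finset.dvd_prod_of_mem s hx
    rw [smul_eq_mul, hc, mul_right_comm, hsx x hx, zero_mul]
  refine ⟨∏ x ∈ t, s x, fun hmem => ?_, fun x hx => Submodule.mem_annihilator.mp hann x hx⟩
  obtain ⟨x, hx, hxP⟩ := IsPrime.prod_mem_iff.mp hmem
  exact hsP x hx hxP

theorem eq_zero_of_forall_mem_minimalPrimes {a : R} (ha : ∀ P ∈ minimalPrimes R, a ∈ P) :
    a = 0 := by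
  have : a ∈ sInf (⊥ : Ideal R).minimalPrimes := mem_sInf.mpr ha
  rwa [sInf_minimalPrimes, radical_bot_of_isReduced, mem_bot] at this

theorem eq_zero_of_coversMinSpec_of_forall_mul_eq_zero {T : Set R} (hT : CoversMinSpec T)
    {a : R} (ha : ∀ u ∈ T, a * u = 0) : a = 0 := by
  refine eq_zero_of_forall_mem_minimalPrimes fun P hP => ?_
  obtain ⟨u, huT, huP⟩ := hT ⟨⟨P, hP.isPrime⟩, hP⟩
  exact (hP.isPrime.mem_or_mem (ha u huT ▸ P.zero_mem)).resolve_right huP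

end

/-- R has no countably generated sd-ideal iff R has property (A) and
Min(R) is countably compact (countable basic open covers admit finite subcovers). -/
theorem no_countable_sd_iff (R : Type*) [CommRing R] [IsReduced R] :
    (¬ ∃ I : Ideal R, (∃ S : Set R, S.Countable ∧ I = Ideal.span S) ∧
        (∀ x ∈ I, x ∉ nonZeroDivisors R) ∧ ∀ P ∈ minimalPrimes R, ¬ I ≤ P) ↔
    ((∀ I : Ideal R, I.FG → (∀ x ∈ I, x ∉ nonZeroDivisors R) →
        ∃ a : R, a ≠ 0 ∧ ∀ x ∈ I, a * x = 0) ∧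
      ∀ S : Set R, S.Countable → (∀ P : MinSpec R, ∃ a ∈ S, a ∉ P.1.asIdeal) →
        ∃ T : Finset R, ↑T ⊆ S ∧ ∀ P : MinSpec R, ∃ a ∈ T, a ∉ P.1.asIdeal) := by
  constructor
  · intro h
    refine ⟨fun I hI hZ => ?_, fun S hS hcov => ?_⟩
    · by_cases hmin : ∃ P ∈ minimalPrimes R, I ≤ P
      · obtain ⟨P, hP, hIP⟩ := hmin
        obtain ⟨s, hsP, hs⟩ := exists_notMem_forall_mul_eq_zero_of_fg_of_le hP hI hIP
        exact ⟨s, fun hs0 => hsP (hs0 ▸ P.zero_mem), hs⟩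
      · obtain ⟨t, rfl⟩ := hI
        exact absurd ⟨_, ⟨t, t.countable_toSet, rfl⟩, hZ, by simpa using hmin⟩ h
    · by_contra hfin
      exact h ⟨span S, ⟨S, hS, rfl⟩, isSdIdeal_span_of_coversMinSpec hcov hfin⟩
  · rintro ⟨hA, hC⟩ ⟨_, ⟨S, hS, rfl⟩, hZ, hnle⟩
    obtain ⟨T, hTS, hT⟩ := hC S hS (coversMinSpec_iff_forall_not_span_le.mpr hnle)
    obtain ⟨a, ha0, ha⟩ := hA _ (Submodule.fg_span T.finite_toSet)
      fun x hx => hZ x (span_mono hTS hx)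
    exact ha0 (eq_zero_of_coversMinSpec_of_forall_mul_eq_zero hT fun u hu => ha u (subset_span hu))
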